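/- Consider the superexponential regime in which a_T/T → ∞. The pair (ĉ_R, x̂_R), where ĉ_R(x,P,T) := max_{i∈Σ} ℓ(x,i) is the robust predictor and x̂_{R,T}(P) ∈ argmin_{x∈𝒳} max_{i∈Σ} ℓ(x,i), is a prescriptor satisfying the prescription out-of-sample guarantee, and for every prescriptor pair (ĉ, x̂) (with ĉ ∈ 𝒞 regular) satisfying the prescription out-of-sample guarantee one has (ĉ_R, x̂_R) ⪯_X̂ (ĉ, x̂); that is, (ĉ_R, x̂_R) is a strongly optimal prescriptor in the superexponential regime. -/

import Mathlib

open Filter Asymptotics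

namespace DDO

/-- The probability simplex `𝒫` over the scenario set `Σ = Fin d`. -/
def simplex (d : ℕ) : Set (Fin d → ℝ) :=
  {P | (∀ i, 0 ≤ P i) ∧ ∑ i, P i = 1}

/-- The relative interior `𝒫°` of the probability simplex. -/
def simplexInt (d : ℕ) : Set (Fin d → ℝ) :=
  {P | (∀ i, 0 < P i) ∧ ∑ i, P i = 1}

/-- Expected cost `c(x, P) = ∑ i, ℓ(x, i) · P(i)` (extended linearly to `ℝ^d`). -/
noncomputable def cost {X : Type*} {d : ℕ} (ℓ : X → Fin d → ℝ) (x : X)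
    (P : Fin d → ℝ) : ℝ :=
  ∑ i, ℓ x i * P i

/-- Variance `Var_P(ℓ(x, ξ))` of the loss under `P`. -/
noncomputable def varLoss {X : Type*} {d : ℕ} (ℓ : X → Fin d → ℝ) (x : X)
    (P : Fin d → ℝ) : ℝ :=
  (∑ i, ℓ x i ^ 2 * P i) - cost ℓ x P ^ 2

/-- Empirical distribution `P̂_T` of the `T` samples `ω`. -/
noncomputable def empDist {d T : ℕ} (ω : Fin T → Fin d) : Fin d → ℝ :=
  fun i => ((Finset.univ.filter (fun t => ω t = i)).card : ℝ) / (T : ℝ)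

open Classical in
/-- `ℙ^∞(A)`: the probability, under i.i.d. sampling from `P`, of an event `A`
depending on the first `T` samples. -/
noncomputable def probT {d : ℕ} (P : Fin d → ℝ) (T : ℕ)
    (A : (Fin T → Fin d) → Prop) : ℝ :=
  ∑ ω : Fin T → Fin d, if A ω then ∏ t, P (ω t) else 0

/-- Regular predictors (the class `𝒞`): uniformly bounded, equicontinuous,
differentiable in the distribution argument (in the Fréchet sense along the simplex),
with uniformly bounded and equicontinuous derivatives. -/
structure IsRegularPredictor {X : Type*} [MetricSpace X] (d : ℕ)
    (chat : X → (Fin d → ℝ) → ℕ → ℝ) : Prop where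
  unifBounded : ∃ K : ℝ, ∀ (T : ℕ) (x : X), ∀ P ∈ simplex d, |chat x P T| ≤ K
  equicontinuous : ∀ (x : X), ∀ P ∈ simplex d, ∀ ε > (0 : ℝ), ∃ δ > (0 : ℝ),
    ∀ (T : ℕ) (x' : X), ∀ P' ∈ simplex d,
      dist x x' < δ → dist P P' < δ → |chat x P T - chat x' P' T| < ε
  differentiableDeriv : ∃ D : X → (Fin d → ℝ) → ℕ → ((Fin d → ℝ) →L[ℝ] ℝ),
    (∀ (T : ℕ) (x : X), ∀ P ∈ simplex d,
      HasFDerivWithinAt (fun Q => chat x Q T) (D x P T) (simplex d) P) ∧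
    (∃ K : ℝ, ∀ (T : ℕ) (x : X), ∀ P ∈ simplex d, ‖D x P T‖ ≤ K) ∧
    (∀ (x : X), ∀ P ∈ simplex d, ∀ ε > (0 : ℝ), ∃ δ > (0 : ℝ),
      ∀ (T : ℕ) (x' : X), ∀ P' ∈ simplex d,
        dist x x' < δ → dist P P' < δ → ‖D x P T - D x' P' T‖ < ε)

/-- The out-of-sample guarantee at speed `(a_T)`:
`limsup_{T→∞} (1/a_T) · log ℙ^∞( c(x,P) > ĉ(x, P̂_T, T) ) ≤ -1`
for every `x ∈ 𝒳` and `P ∈ 𝒫°`, stated in the equivalent ε-eventual form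
`ℙ^∞(disappointment) ≤ exp((-1+ε) a_T)` eventually (which in particular permits a
disappointment probability equal to zero). -/
def OOSGuarantee {X : Type*} {d : ℕ} (ℓ : X → Fin d → ℝ) (a : ℕ → ℝ)
    (chat : X → (Fin d → ℝ) → ℕ → ℝ) : Prop :=
  ∀ (x : X), ∀ P ∈ simplexInt d, ∀ ε > (0 : ℝ), ∀ᶠ T : ℕ in atTop,
    probT P T (fun ω => cost ℓ x P > chat x (empDist ω) T) ≤
      Real.exp ((-1 + ε) * a T)

/-- The prediction error `|ĉ(x,P,T) - c(x,P)|`. -/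
noncomputable def predErr {X : Type*} {d : ℕ} (ℓ : X → Fin d → ℝ)
    (chat : X → (Fin d → ℝ) → ℕ → ℝ) (x : X) (P : Fin d → ℝ) (T : ℕ) : ℝ :=
  |chat x P T - cost ℓ x P|

open Classical in
/-- Ratio with the convention `0 / 0 = 1`. -/
noncomputable def ratio (u v : ℝ) : ℝ := if u = 0 ∧ v = 0 then 1 else u / v

/-- The partial order `⪯_𝒞` on predictors:
`limsup_{T→∞} |ĉ₁(x,P,T) - c(x,P)| / |ĉ₂(x,P,T) - c(x,P)| ≤ 1`
(convention `0/0 = 1`) for every `x ∈ 𝒳`, `P ∈ 𝒫°`, stated in the equivalent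
ε-eventual form (the ratio is a nonnegative sequence). -/
def PredOrder {X : Type*} {d : ℕ} (ℓ : X → Fin d → ℝ)
    (chat1 chat2 : X → (Fin d → ℝ) → ℕ → ℝ) : Prop :=
  ∀ (x : X), ∀ P ∈ simplexInt d, ∀ ε > (0 : ℝ), ∀ᶠ T : ℕ in atTop,
    ratio (predErr ℓ chat1 x P T) (predErr ℓ chat2 x P T) ≤ 1 + ε

/-- The equivalence `≡` on predictors: `|ĉ₁ - c|` and `|ĉ₂ - c|` are asymptotically
equivalent as `T → ∞` for every `x ∈ 𝒳` and `P ∈ 𝒫°`. -/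
def PredEquiv {X : Type*} {d : ℕ} (ℓ : X → Fin d → ℝ)
    (chat1 chat2 : X → (Fin d → ℝ) → ℕ → ℝ) : Prop :=
  ∀ (x : X), ∀ P ∈ simplexInt d,
    (fun T : ℕ => predErr ℓ chat1 x P T) ~[atTop]
      (fun T : ℕ => predErr ℓ chat2 x P T)

/-- A single term `q · log(q/p)` of the relative entropy, with the conventions
`0 · log(0/p) = 0` and `q · log(q/0) = ∞` for `q > 0`. -/
noncomputable def klTerm (q p : ℝ) : EReal :=
  if q = 0 then 0 else if p = 0 then ⊤ else ((q * Real.log (q / p) : ℝ) : EReal)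

/-- The relative entropy (KL divergence) `I(Q, P')`. -/
noncomputable def relEnt {d : ℕ} (Q P' : Fin d → ℝ) : EReal :=
  ∑ i, klTerm (Q i) (P' i)

/-- The KL-DRO predictor with radius `r`:
`ĉ_KL(x,P) = sup { c(x,P') : P' ∈ 𝒫, I(P,P') ≤ r }`. -/
noncomputable def cKL {X : Type*} {d : ℕ} (ℓ : X → Fin d → ℝ) (r : ℝ)
    (x : X) (P : Fin d → ℝ) : ℝ :=
  sSup {y | ∃ P' ∈ simplex d, relEnt P P' ≤ (r : EReal) ∧ y = cost ℓ x P'}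

/-- The robust predictor `ĉ_R(x) = max_{i ∈ Σ} ℓ(x,i)`. -/
noncomputable def cR {X : Type*} {d : ℕ} (ℓ : X → Fin d → ℝ) (x : X) : ℝ :=
  ⨆ i : Fin d, ℓ x i

/-- The sample variance penalization (SVP) predictor
`ĉ_V(x,P,T) = c(x,P) + √((2 a_T / T) · Var_P(ℓ(x,ξ)))`. -/
noncomputable def cV {X : Type*} {d : ℕ} (a : ℕ → ℝ) (ℓ : X → Fin d → ℝ)
    (x : X) (P : Fin d → ℝ) (T : ℕ) : ℝ :=
  cost ℓ x P + Real.sqrt ((2 * a T / (T : ℝ)) * varLoss ℓ x P)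

/-- The squared local ellipsoid norm `‖Δ‖_P² = (1/2) ∑ i, Δ_i² / P(i)`. -/
noncomputable def ellNormSq {d : ℕ} (P Δ : Fin d → ℝ) : ℝ :=
  (1 / 2) * ∑ i, Δ i ^ 2 / P i

/-- The optimal cost `c*(P) = min_{x ∈ 𝒳} c(x,P)`. -/
noncomputable def cstar {X : Type*} {d : ℕ} (ℓ : X → Fin d → ℝ)
    (P : Fin d → ℝ) : ℝ :=
  sInf (Set.range fun x : X => cost ℓ x P)

/-- The optimal predicted cost `ĉ*(P,T) = min_{x ∈ 𝒳} ĉ(x,P,T)`. -/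
noncomputable def chatStar {X : Type*} {d : ℕ} (chat : X → (Fin d → ℝ) → ℕ → ℝ)
    (P : Fin d → ℝ) (T : ℕ) : ℝ :=
  sInf (Set.range fun x : X => chat x P T)

/-- `x̂` is a prescriptor associated with the predictor `ĉ`:
`x̂_T(P) ∈ argmin_{x ∈ 𝒳} ĉ(x,P,T)` for all `P ∈ 𝒫` and `T`. -/
def IsPrescriptor {X : Type*} {d : ℕ} (chat : X → (Fin d → ℝ) → ℕ → ℝ)
    (xhat : ℕ → (Fin d → ℝ) → X) : Prop :=
  ∀ (T : ℕ), ∀ P ∈ simplex d, ∀ x : X, chat (xhat T P) P T ≤ chat x P T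

/-- The prescription out-of-sample guarantee at speed `(a_T)`:
`limsup_{T→∞} (1/a_T) · log ℙ^∞( c(x̂_T(P̂_T), P) > ĉ*(P̂_T, T) ) ≤ -1`
for every `P ∈ 𝒫°`, stated in the equivalent ε-eventual form. -/
def PrescOOSGuarantee {X : Type*} {d : ℕ} (ℓ : X → Fin d → ℝ) (a : ℕ → ℝ)
    (chat : X → (Fin d → ℝ) → ℕ → ℝ) (xhat : ℕ → (Fin d → ℝ) → X) : Prop :=
  ∀ P ∈ simplexInt d, ∀ ε > (0 : ℝ), ∀ᶠ T : ℕ in atTop,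
    probT P T (fun ω =>
        cost ℓ (xhat T (empDist ω)) P > chatStar chat (empDist ω) T) ≤
      Real.exp ((-1 + ε) * a T)

/-- The partial order `⪯_X̂` on prescriptors:
`limsup_{T→∞} |ĉ₁*(P,T) - c*(P)| / |ĉ₂*(P,T) - c*(P)| ≤ 1` (convention `0/0 = 1`)
for every `P ∈ 𝒫°`, stated in the equivalent ε-eventual form. -/
def PrescOrder {X : Type*} {d : ℕ} (ℓ : X → Fin d → ℝ)
    (chat1 chat2 : X → (Fin d → ℝ) → ℕ → ℝ) : Prop :=
  ∀ P ∈ simplexInt d, ∀ ε > (0 : ℝ), ∀ᶠ T : ℕ in atTop,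
    ratio |chatStar chat1 P T - cstar ℓ P| |chatStar chat2 P T - cstar ℓ P| ≤ 1 + ε

/-- The equivalence `≡_X̂` on prescriptors: `|ĉ₁* - c*|` and `|ĉ₂* - c*|` are
asymptotically equivalent as `T → ∞` for every `P ∈ 𝒫°`. -/
def PrescEquiv {X : Type*} {d : ℕ} (ℓ : X → Fin d → ℝ)
    (chat1 chat2 : X → (Fin d → ℝ) → ℕ → ℝ) : Prop :=
  ∀ P ∈ simplexInt d,
    (fun T : ℕ => |chatStar chat1 P T - cstar ℓ P|) ~[atTop]
      (fun T : ℕ => |chatStar chat2 P T - cstar ℓ P|)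

/-!
The robust decision never disappoints, since `c(x, P) ≤ max_i ℓ(x, i)` for every `P`, and
`ĉ_R` is regular because it depends continuously on `x` alone. Conversely, let `(ĉ, x̂)` satisfy
the guarantee with `a_T / T → ∞`. Under a law charging every scenario with mass at least `p > 0`,
each sample path has probability at least `p ^ T`, which eventually exceeds `exp (-a_T / 2)`; so
eventually no sample path at all is a disappointment. Applied to the laws
`(1 - σ) δᵢ + σ · uniform`, this gives `ĉ*(P̂, T) ≥ min_x max_i ℓ(x, i) - 2 σ sup |ℓ|` at every
empirical distribution `P̂`. Empirical distributions are `1/T`-dense in the simplex and `ĉ*` is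
uniformly Lipschitz there, so `liminf_T ĉ*(P, T) ≥ min_x max_i ℓ(x, i) ≥ c*(P)`, which gives the
claimed order.
-/

section RobustPredictor

variable {X : Type*} {d : ℕ} (ℓ : X → Fin d → ℝ)

lemma le_cR (x : X) (i : Fin d) : ℓ x i ≤ cR ℓ x :=
  le_ciSup (Set.finite_range _).bddAbove i

lemma exists_eq_cR [NeZero d] (x : X) : ∃ i, ℓ x i = cR ℓ x :=
  exists_eq_ciSup_of_finite

lemma continuous_cR [TopologicalSpace X] (hℓ : ∀ i, Continuous fun x => ℓ x i) :
    Continuous (cR ℓ) := by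
  rcases isEmpty_or_nonempty (Fin d) with _ | _
  · have h : cR ℓ = fun _ => 0 := funext fun x => Real.iSup_of_isEmpty _
    rw [h]
    exact continuous_const
  · have h : cR ℓ = fun x => Finset.univ.sup' Finset.univ_nonempty (ℓ x ·) :=
      funext fun x => (Finset.sup'_univ_eq_ciSup _).symm
    rw [h]
    exact Continuous.finset_sup'_apply _ fun i _ => hℓ i

lemma cost_le_cR {P : Fin d → ℝ} (hP : P ∈ simplex d) (x : X) : cost ℓ x P ≤ cR ℓ x :=
  calc cost ℓ x P ≤ ∑ i, cR ℓ x * P i :=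
        Finset.sum_le_sum fun i _ => mul_le_mul_of_nonneg_right (le_cR ℓ x i) (hP.1 i)
    _ = cR ℓ x := by rw [← Finset.mul_sum, hP.2, mul_one]

lemma neg_le_cost {x : X} {M : ℝ} (hM : ∀ i, |ℓ x i| ≤ M) {P : Fin d → ℝ}
    (hP : P ∈ simplex d) : -M ≤ cost ℓ x P :=
  calc -M = ∑ i, -M * P i := by rw [← Finset.mul_sum, hP.2, mul_one]
    _ ≤ cost ℓ x P :=
        Finset.sum_le_sum fun i _ => mul_le_mul_of_nonneg_right (neg_le_of_abs_le (hM i)) (hP.1 i)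

lemma exists_pos_abs_le [TopologicalSpace X] [CompactSpace X]
    (hℓ : ∀ i, Continuous fun x => ℓ x i) : ∃ M > 0, ∀ x i, |ℓ x i| ≤ M := by
  obtain ⟨M, hM0, hM⟩ := (isCompact_range (continuous_pi hℓ)).isBounded.exists_pos_norm_le
  exact ⟨M, hM0, fun x i => (norm_le_pi_norm (ℓ x) i).trans (hM _ ⟨x, rfl⟩)⟩

lemma bddBelow_range_cR [NeZero d] {M : ℝ} (hM : ∀ x i, |ℓ x i| ≤ M) :
    BddBelow (Set.range (cR ℓ)) :=
  ⟨-M, by rintro _ ⟨x, rfl⟩; exact (neg_le_of_abs_le (hM x 0)).trans (le_cR ℓ x 0)⟩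

lemma cstar_le_sInf_cR [Nonempty X] {M : ℝ} (hM : ∀ x i, |ℓ x i| ≤ M) {P : Fin d → ℝ}
    (hP : P ∈ simplex d) : cstar ℓ P ≤ sInf (Set.range (cR ℓ)) := by
  have hbdd : BddBelow (Set.range fun x => cost ℓ x P) :=
    ⟨-M, by rintro _ ⟨x, rfl⟩; exact neg_le_cost ℓ (hM x) hP⟩
  refine le_csInf (Set.range_nonempty _) ?_
  rintro _ ⟨x, rfl⟩
  exact (csInf_le hbdd ⟨x, rfl⟩).trans (cost_le_cR ℓ hP x)

end RobustPredictor

section MixDirac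

variable {d : ℕ}

noncomputable def mixDirac (d : ℕ) (σ : ℝ) (i : Fin d) : Fin d → ℝ :=
  fun j => (1 - σ) * (if j = i then 1 else 0) + σ / d

lemma div_le_mixDirac {σ : ℝ} (hσ : σ ≤ 1) (i j : Fin d) : σ / d ≤ mixDirac d σ i j := by
  have : 0 ≤ (1 - σ) * (if j = i then 1 else 0 : ℝ) := by
    apply mul_nonneg (by linarith); split_ifs <;> norm_num
  simp only [mixDirac]
  linarith

lemma mixDirac_mem_simplexInt [NeZero d] {σ : ℝ} (hσ0 : 0 < σ) (hσ1 : σ ≤ 1) (i : Fin d) :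
    mixDirac d σ i ∈ simplexInt d := by
  have hd : (0 : ℝ) < d := by exact_mod_cast Nat.pos_of_neZero d
  refine ⟨fun j => (div_pos hσ0 hd).trans_le (div_le_mixDirac hσ1 i j), ?_⟩
  simp only [mixDirac, Finset.sum_add_distrib, mul_ite, mul_one, mul_zero,
    Finset.sum_ite_eq', Finset.mem_univ, if_true, Finset.sum_const, Finset.card_univ,
    Fintype.card_fin, nsmul_eq_mul]
  field_simp
  ring

lemma cost_mixDirac {X : Type*} (ℓ : X → Fin d → ℝ) (x : X) (σ : ℝ) (i : Fin d) :
    cost ℓ x (mixDirac d σ i) = (1 - σ) * ℓ x i + σ / d * ∑ j, ℓ x j := by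
  simp only [cost, mixDirac, mul_ite, mul_one, mul_zero, mul_add, Finset.sum_add_distrib,
    Finset.sum_ite_eq', Finset.mem_univ, ↓reduceIte, ← Finset.sum_mul]
  ring

lemma exists_cR_sub_le_cost_mixDirac [NeZero d] {X : Type*} (ℓ : X → Fin d → ℝ) (x : X)
    {M : ℝ} (hM : ∀ j, |ℓ x j| ≤ M) {σ : ℝ} (hσ : 0 ≤ σ) :
    ∃ i, cR ℓ x - 2 * σ * M ≤ cost ℓ x (mixDirac d σ i) := by
  obtain ⟨i, hi⟩ := exists_eq_cR ℓ x
  refine ⟨i, ?_⟩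
  have hd : (0 : ℝ) < d := by exact_mod_cast Nat.pos_of_neZero d
  have hsum : -(d * M) ≤ ∑ j, ℓ x j := by
    simpa using Finset.sum_le_sum fun j (_ : j ∈ Finset.univ) => neg_le_of_abs_le (hM j)
  have hmean : -(σ * M) ≤ σ / d * ∑ j, ℓ x j := by
    calc -(σ * M) = σ / d * -(d * M) := by field_simp
      _ ≤ _ := mul_le_mul_of_nonneg_left hsum (by positivity)
  rw [cost_mixDirac, hi]
  nlinarith [le_of_abs_le (hM i)]

end MixDirac

section Empirical

variable {d : ℕ}

lemma empDist_mem_simplex {T : ℕ} (hT : 0 < T) (ω : Fin T → Fin d) :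
    empDist ω ∈ simplex d := by
  refine ⟨fun i => by unfold empDist; positivity, ?_⟩
  have hcard : ∑ i : Fin d, (Finset.univ.filter fun t => ω t = i).card = T := by
    simpa using (Finset.card_eq_sum_card_fiberwise (s := Finset.univ) (t := Finset.univ)
      fun t _ => Finset.mem_univ (ω t)).symm
  simp only [empDist, ← Finset.sum_div]
  rw [← Nat.cast_sum, hcard, div_self (by positivity)]

lemma exists_card_filter_eq {T : ℕ} (n : Fin d → ℕ) (hn : ∑ i, n i = T) :
    ∃ ω : Fin T → Fin d, ∀ i, (Finset.univ.filter fun t => ω t = i).card = n i := by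
  subst hn
  refine ⟨fun t => (finSigmaFinEquiv.symm t).1, fun i => ?_⟩
  rw [← Fintype.card_subtype, ← Fintype.card_fin (n i)]
  exact Fintype.card_congr
    ((finSigmaFinEquiv.symm.subtypeEquiv fun _ => Iff.rfl).trans (Equiv.sigmaSubtype i))

lemma exists_nat_sum_eq_abs_sub_lt (y : Fin d → ℝ) (hy : ∀ i, 0 ≤ y i) {N : ℕ}
    (hN : ∑ i, y i = N) : ∃ n : Fin d → ℕ, ∑ i, n i = N ∧ ∀ i, |(n i : ℝ) - y i| < 1 := by
  -- round the partial sums `F k = ∑_{j < k} y j` down and take differences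
  set F : ℕ → ℝ := fun k => ∑ j ∈ Finset.range k, if h : j < d then y ⟨j, h⟩ else 0
  have hF_mono : Monotone F := fun k m hkm =>
    Finset.sum_le_sum_of_subset_of_nonneg (Finset.range_subset_range.2 hkm)
      fun j _ _ => by split_ifs <;> simp [hy]
  have hF_succ (i : Fin d) : F (i + 1) = F i + y i := by
    simp [F, Finset.sum_range_succ]
  have hF_d : F d = N := by
    simp only [F]
    rw [← hN, ← Fin.sum_univ_eq_sum_range (fun j => if h : j < d then y ⟨j, h⟩ else 0) d]
    simp
  set c : ℕ → ℕ := fun k => ⌊F k⌋₊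
  have hc_mono : Monotone c := fun k m hkm => Nat.floor_mono (hF_mono hkm)
  have hc (k : ℕ) : (c k : ℝ) ≤ F k ∧ F k < c k + 1 :=
    ⟨Nat.floor_le ((hF_mono (Nat.zero_le k)).trans' (by simp [F])), Nat.lt_floor_add_one _⟩
  refine ⟨fun i => c (i + 1) - c i, ?_, fun i => ?_⟩
  · rw [Fin.sum_univ_eq_sum_range (fun k => c (k + 1) - c k), Finset.sum_range_tsub hc_mono]
    simp [c, hF_d, F]
  · rw [Nat.cast_sub (hc_mono (Nat.le_succ _)), abs_sub_lt_iff]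
    have h1 := hc i
    have h2 := hc (i + 1)
    rw [hF_succ] at h2
    constructor <;> linarith

lemma exists_dist_empDist_le {P : Fin d → ℝ} (hP : P ∈ simplex d) {T : ℕ} (hT : 0 < T) :
    ∃ ω : Fin T → Fin d, dist (empDist ω) P ≤ 1 / T := by
  have hT' : (0 : ℝ) < T := by exact_mod_cast hT
  obtain ⟨n, hn, hnP⟩ := exists_nat_sum_eq_abs_sub_lt (fun i => T * P i)
    (fun i => mul_nonneg hT'.le (hP.1 i)) (by rw [← Finset.mul_sum, hP.2, mul_one])
  obtain ⟨ω, hω⟩ := exists_card_filter_eq n hn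
  refine ⟨ω, (dist_pi_le_iff (by positivity)).2 fun i => ?_⟩
  have : empDist ω i - P i = (n i - T * P i) / T := by
    simp only [empDist, hω]
    field_simp
  rw [Real.dist_eq, this, abs_div, abs_of_pos hT']
  exact div_le_div_of_nonneg_right (hnP i).le hT'.le

end Empirical

section Probability

variable {d : ℕ}

lemma probT_eq_zero (P : Fin d → ℝ) {T : ℕ} {A : (Fin T → Fin d) → Prop} (hA : ∀ ω, ¬ A ω) :
    probT P T A = 0 :=
  Finset.sum_eq_zero fun ω _ => if_neg (hA ω)

lemma pow_le_probT {P : Fin d → ℝ} {p : ℝ} (hp : 0 ≤ p) (hpP : ∀ i, p ≤ P i) {T : ℕ}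
    {A : (Fin T → Fin d) → Prop} {ω : Fin T → Fin d} (hω : A ω) : p ^ T ≤ probT P T A := by
  classical
  have hP : ∀ i, 0 ≤ P i := fun i => hp.trans (hpP i)
  calc p ^ T = ∏ _t : Fin T, p := by simp
    _ ≤ ∏ t, P (ω t) := Finset.prod_le_prod (fun _ _ => hp) fun t _ => hpP (ω t)
    _ = if A ω then ∏ t, P (ω t) else 0 := (if_pos hω).symm
    _ ≤ probT P T A := by
        refine Finset.single_le_sum (f := fun ω' => if A ω' then ∏ t, P (ω' t) else 0)
          (fun ω' _ => ?_) (Finset.mem_univ ω)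
        split_ifs
        exacts [Finset.prod_nonneg fun t _ => hP (ω' t), le_rfl]

lemma eventually_forall_not_of_probT_le {P : Fin d → ℝ} {p : ℝ} (hp : 0 < p)
    (hpP : ∀ i, p ≤ P i) {a : ℕ → ℝ} (ha : Tendsto (fun T : ℕ => a T / T) atTop atTop)
    {κ : ℝ} (hκ : 0 < κ) {A : ∀ T : ℕ, (Fin T → Fin d) → Prop}
    (hA : ∀ᶠ T in atTop, probT P T (A T) ≤ Real.exp (-κ * a T)) :
    ∀ᶠ T in atTop, ∀ ω, ¬ A T ω := by
  filter_upwards [hA, ha.eventually_gt_atTop (-Real.log p / κ), eventually_gt_atTop 0]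
    with T hAT haT hT ω hω
  have hT' : (0 : ℝ) < T := by exact_mod_cast hT
  rw [div_lt_div_iff₀ hκ hT'] at haT
  have hlt : Real.exp (-κ * a T) < p ^ T := by
    rw [← Real.exp_log hp, ← Real.exp_nat_mul, Real.exp_lt_exp]
    linarith
  linarith [pow_le_probT hp.le hpP hω]

end Probability

section RegularPredictor

variable {X : Type*} [MetricSpace X] {d : ℕ}

lemma isRegularPredictor_of_continuous [CompactSpace X] {f : X → ℝ} (hf : Continuous f) :
    IsRegularPredictor d (fun x (_ : Fin d → ℝ) (_ : ℕ) => f x) where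
  unifBounded := by
    obtain ⟨K, hK⟩ := (isCompact_range hf).isBounded.exists_norm_le
    exact ⟨K, fun _ x _ _ => hK _ ⟨x, rfl⟩⟩
  equicontinuous x _ _ ε hε := by
    obtain ⟨δ, hδ, hf⟩ := Metric.continuous_iff.1 hf x ε hε
    exact ⟨δ, hδ, fun _ x' _ _ hx _ => by
      rw [← Real.dist_eq, dist_comm]; exact hf x' (by rwa [dist_comm])⟩
  differentiableDeriv := ⟨fun _ _ _ => 0, fun _ _ _ _ => hasFDerivWithinAt_const _ _ _,
    ⟨0, fun _ _ _ _ => by simp⟩, fun _ _ _ _ hε => ⟨1, one_pos, fun _ _ _ _ _ _ => by simpa⟩⟩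

lemma IsRegularPredictor.exists_lipschitzOnWith {chat : X → (Fin d → ℝ) → ℕ → ℝ}
    (hreg : IsRegularPredictor d chat) :
    ∃ K : NNReal, ∀ x T, LipschitzOnWith K (fun Q => chat x Q T) (simplex d) := by
  obtain ⟨D, hD, ⟨K, hK⟩, -⟩ := hreg.differentiableDeriv
  refine ⟨K.toNNReal, fun x T =>
    (convex_stdSimplex ℝ (Fin d)).lipschitzOnWith_of_nnnorm_hasFDerivWithin_le (hD T x)
      fun P hP => ?_⟩
  rw [← NNReal.coe_le_coe, coe_nnnorm]
  exact (hK T x P hP).trans (Real.le_coe_toNNReal K)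

lemma IsRegularPredictor.exists_chatStar_le_add [Nonempty X]
    {chat : X → (Fin d → ℝ) → ℕ → ℝ} (hreg : IsRegularPredictor d chat) :
    ∃ K : ℝ, 0 ≤ K ∧ ∀ T, ∀ P ∈ simplex d, ∀ Q ∈ simplex d,
      chatStar chat Q T ≤ chatStar chat P T + K * dist Q P := by
  obtain ⟨K, hK⟩ := hreg.exists_lipschitzOnWith
  obtain ⟨B, hB⟩ := hreg.unifBounded
  refine ⟨K, K.2, fun T P hP Q hQ => ?_⟩
  rw [← sub_le_iff_le_add]
  refine le_csInf (Set.range_nonempty _) ?_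
  rintro _ ⟨x, rfl⟩
  have hbdd : BddBelow (Set.range fun x => chat x Q T) :=
    ⟨-B, by rintro _ ⟨x', rfl⟩; exact neg_le_of_abs_le (hB T x' Q hQ)⟩
  have hQx : chatStar chat Q T ≤ chat x Q T := csInf_le hbdd ⟨x, rfl⟩
  have hlip := (hK x T).dist_le_mul Q hQ P hP
  rw [Real.dist_eq] at hlip
  show chatStar chat Q T - K * dist Q P ≤ chat x P T
  linarith [le_of_abs_le hlip]

end RegularPredictor

section LowerBound

variable {X : Type*} {d : ℕ} [NeZero d] (ℓ : X → Fin d → ℝ) {a : ℕ → ℝ}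
  {chat : X → (Fin d → ℝ) → ℕ → ℝ} {xhat : ℕ → (Fin d → ℝ) → X}

lemma eventually_sInf_cR_sub_le_chatStar_empDist {M : ℝ} (hM0 : 0 < M)
    (hM : ∀ x i, |ℓ x i| ≤ M) (ha : Tendsto (fun T : ℕ => a T / T) atTop atTop)
    (hguar : PrescOOSGuarantee ℓ a chat xhat) {η : ℝ} (hη : 0 < η) :
    ∀ᶠ T in atTop, ∀ ω : Fin T → Fin d,
      sInf (Set.range (cR ℓ)) - η ≤ chatStar chat (empDist ω) T := by
  set σ := min 1 (η / (2 * M))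
  have hσ0 : 0 < σ := lt_min one_pos (by positivity)
  have hσ1 : σ ≤ 1 := min_le_left _ _
  have hσM : 2 * σ * M ≤ η := by
    have := min_le_right 1 (η / (2 * M))
    rw [le_div_iff₀ (by positivity)] at this
    linarith
  have hd : (0 : ℝ) < d := by exact_mod_cast Nat.pos_of_neZero d
  have hfree : ∀ᶠ T in atTop, ∀ i (ω : Fin T → Fin d),
      ¬ cost ℓ (xhat T (empDist ω)) (mixDirac d σ i) > chatStar chat (empDist ω) T := by
    rw [eventually_all]
    intro i
    refine eventually_forall_not_of_probT_le (div_pos hσ0 hd) (div_le_mixDirac hσ1 i) ha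
      one_half_pos ?_
    filter_upwards [hguar _ (mixDirac_mem_simplexInt hσ0 hσ1 i) (1 / 2) one_half_pos]
      with T hT
    convert hT using 3
    norm_num
  filter_upwards [hfree] with T hT ω
  obtain ⟨i, hi⟩ := exists_cR_sub_le_cost_mixDirac ℓ (xhat T (empDist ω)) (hM _) hσ0.le
  have hR : sInf (Set.range (cR ℓ)) ≤ cR ℓ (xhat T (empDist ω)) :=
    csInf_le (bddBelow_range_cR ℓ hM) ⟨_, rfl⟩
  linarith [not_lt.1 (hT i ω)]

lemma eventually_sInf_cR_sub_le_chatStar [MetricSpace X] [Nonempty X] {M : ℝ} (hM0 : 0 < M)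
    (hM : ∀ x i, |ℓ x i| ≤ M) (ha : Tendsto (fun T : ℕ => a T / T) atTop atTop)
    (hreg : IsRegularPredictor d chat) (hguar : PrescOOSGuarantee ℓ a chat xhat)
    {P : Fin d → ℝ} (hP : P ∈ simplex d) {η : ℝ} (hη : 0 < η) :
    ∀ᶠ T in atTop, sInf (Set.range (cR ℓ)) - η ≤ chatStar chat P T := by
  obtain ⟨K, hK0, hK⟩ := hreg.exists_chatStar_le_add
  have hK_small : ∀ᶠ T : ℕ in atTop, K * (1 / T) ≤ η / 2 := by
    have h := tendsto_one_div_atTop_nhds_zero_nat.const_mul K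
    rw [mul_zero] at h
    exact h.eventually (eventually_le_nhds (half_pos hη))
  filter_upwards [eventually_sInf_cR_sub_le_chatStar_empDist ℓ hM0 hM ha hguar (half_pos hη),
    hK_small, eventually_gt_atTop 0] with T hT hKT hT0
  obtain ⟨ω, hω⟩ := exists_dist_empDist_le hP hT0
  have hstar := hK T P hP (empDist ω) (empDist_mem_simplex hT0 ω)
  have hKω := mul_le_mul_of_nonneg_left hω hK0
  linarith [hT ω]

end LowerBound

lemma ratio_le_of_le_mul {u v ε : ℝ} (hu : 0 ≤ u) (hε : 0 ≤ ε) (h : u ≤ (1 + ε) * v) :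
    ratio u v ≤ 1 + ε := by
  unfold ratio
  split_ifs with h0
  · linarith
  · rcases le_or_gt v 0 with hv | hv
    · exact absurd ⟨by nlinarith, by nlinarith⟩ h0
    · rw [div_le_iff₀ hv]
      linarith

lemma eventually_le_one_add_mul_abs {α : Type*} {l : Filter α} {A : ℝ} (hA : 0 ≤ A)
    {B : α → ℝ} (hB : ∀ η > 0, ∀ᶠ t in l, A - η ≤ B t) {ε : ℝ} (hε : 0 < ε) :
    ∀ᶠ t in l, A ≤ (1 + ε) * |B t| := by
  rcases hA.eq_or_lt with rfl | hA
  · exact Eventually.of_forall fun t => by positivity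
  · filter_upwards [hB (A * ε / (1 + ε)) (by positivity)] with t ht
    calc A = (1 + ε) * (A - A * ε / (1 + ε)) := by field_simp; ring
      _ ≤ (1 + ε) * |B t| := by gcongr; exact ht.trans (le_abs_self _)

lemma chatStar_of_const {X : Type*} {d : ℕ} (f : X → ℝ) (P : Fin d → ℝ) (T : ℕ) :
    chatStar (fun x (_ : Fin d → ℝ) (_ : ℕ) => f x) P T = sInf (Set.range f) :=
  rfl

theorem stmt_12_general {X : Type*} [MetricSpace X] [CompactSpace X] {d : ℕ}
    (ℓ : X → Fin d → ℝ) (hℓ : ∀ i, Continuous fun x => ℓ x i)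
    (a : ℕ → ℝ)
    (ha_sup : Tendsto (fun T : ℕ => a T / (T : ℝ)) atTop atTop)
    (xhatR : ℕ → (Fin d → ℝ) → X)
    (hxhatR : IsPrescriptor (fun x (_ : Fin d → ℝ) (_ : ℕ) => cR ℓ x) xhatR) :
    IsRegularPredictor d (fun x (_ : Fin d → ℝ) (_ : ℕ) => cR ℓ x) ∧
      PrescOOSGuarantee ℓ a (fun x (_ : Fin d → ℝ) (_ : ℕ) => cR ℓ x) xhatR ∧
      ∀ (chat : X → (Fin d → ℝ) → ℕ → ℝ) (xhat : ℕ → (Fin d → ℝ) → X),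
        IsRegularPredictor d chat → IsPrescriptor chat xhat →
          PrescOOSGuarantee ℓ a chat xhat →
            PrescOrder ℓ (fun x (_ : Fin d → ℝ) (_ : ℕ) => cR ℓ x) chat := by
  have : Nonempty X := ⟨xhatR 0 0⟩
  obtain ⟨M, hM0, hM⟩ := exists_pos_abs_le ℓ hℓ
  refine ⟨isRegularPredictor_of_continuous (continuous_cR ℓ hℓ), fun P hP _ _ => ?_, ?_⟩
  · filter_upwards [eventually_gt_atTop 0] with T hT
    rw [probT_eq_zero P fun ω => not_lt.2 ?_]
    · exact (Real.exp_pos _).le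
    · rw [chatStar_of_const]
      exact (cost_le_cR ℓ ⟨fun i => (hP.1 i).le, hP.2⟩ _).trans
        (le_csInf (Set.range_nonempty _) fun _ ⟨x, hx⟩ =>
          hx ▸ hxhatR T _ (empDist_mem_simplex hT ω) x)
  · intro chat xhat hreg _ hguar P hP ε hε
    have : NeZero d := ⟨by rintro rfl; simpa using hP.2⟩
    have hPs : P ∈ simplex d := ⟨fun i => (hP.1 i).le, hP.2⟩
    have hA := sub_nonneg.2 (cstar_le_sInf_cR ℓ hM hPs)
    have hgap : ∀ η > 0, ∀ᶠ T in atTop,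
        sInf (Set.range (cR ℓ)) - cstar ℓ P - η ≤ chatStar chat P T - cstar ℓ P :=
      fun η hη => (eventually_sInf_cR_sub_le_chatStar ℓ hM0 hM ha_sup hreg hguar hPs hη).mono
        fun T hT => by linarith
    filter_upwards [eventually_le_one_add_mul_abs hA hgap hε] with T hT
    rw [chatStar_of_const]
    exact ratio_le_of_le_mul (abs_nonneg _) hε.le (by rwa [abs_of_nonneg hA])

/-- In the superexponential regime (`a_T/T → ∞`), the pair `(ĉ_R, x̂_R)` built from
the robust predictor is a prescriptor satisfying the prescription out-of-sample
guarantee, and it is preferred (`⪯_X̂`) to every prescriptor pair (with regular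
predictor) satisfying the guarantee: it is a strongly optimal prescriptor. -/
theorem stmt_12 {X : Type*} [MetricSpace X] [CompactSpace X] {d : ℕ}
    (ℓ : X → Fin d → ℝ) (hℓ : ∀ i, Continuous fun x => ℓ x i)
    (a : ℕ → ℝ) (ha_pos : ∀ T, 0 < a T)
    (ha_top : Tendsto a atTop atTop)
    (ha_sup : Tendsto (fun T : ℕ => a T / (T : ℝ)) atTop atTop)
    (xhatR : ℕ → (Fin d → ℝ) → X)
    (hxhatR : IsPrescriptor (fun x (_ : Fin d → ℝ) (_ : ℕ) => cR ℓ x) xhatR) :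
    IsRegularPredictor d (fun x (_ : Fin d → ℝ) (_ : ℕ) => cR ℓ x) ∧
      PrescOOSGuarantee ℓ a (fun x (_ : Fin d → ℝ) (_ : ℕ) => cR ℓ x) xhatR ∧
      ∀ (chat : X → (Fin d → ℝ) → ℕ → ℝ) (xhat : ℕ → (Fin d → ℝ) → X),
        IsRegularPredictor d chat → IsPrescriptor chat xhat →
          PrescOOSGuarantee ℓ a chat xhat →
            PrescOrder ℓ (fun x (_ : Fin d → ℝ) (_ : ℕ) => cR ℓ x) chat :=
  stmt_12_general ℓ hℓ a ha_sup xhatR hxhatR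

end DDO
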